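/- arXiv:2002.11068 — 4 statements merged into one kernel-verified Lean document; each statement's English description precedes it below -/
import Mathlib

section
/- Let x₀ ≥ 2⁹ be real and suppose α > 0 is such that θ(x) ≤ (1 + α)·x for all x > 0. Then for all real x ≥ x₀ one has ∑_{k=3}^{⌊log x / log 2⌋} θ(x^{1/k}) ≤ η·x^{1/3}, where η = (1 + α)·max( f(x₀), f(2^{⌊log x₀ / log 2⌋ + 1}) ). -/
/-- Chebyshev theta function: `θ(x) = ∑_{p ≤ x, p prime} log p`. -/
noncomputable def chebTheta (x : ℝ) : ℝ :=
  ∑ p ∈ (Finset.range (⌊x⌋₊ + 1)).filter Nat.Prime, Real.log p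

/-- Chebyshev psi function: `ψ(x) = ∑_{n ≤ x} Λ(n)`. -/
noncomputable def chebPsi (x : ℝ) : ℝ :=
  ∑ n ∈ Finset.range (⌊x⌋₊ + 1), ArithmeticFunction.vonMangoldt n


/-- The function `f(x) = ∑_{k=3}^{⌊log x / log 2⌋} x^(1/k - 1/3)`. -/
noncomputable def auxF (x : ℝ) : ℝ :=
  ∑ k ∈ Finset.Icc 3 ⌊Real.log x / Real.log 2⌋₊, x ^ ((k : ℝ)⁻¹ - (3 : ℝ)⁻¹)

/-!
Bounding each `θ(x^{1/k})` by `C x^{1/k}` reduces the claim to `f(x) ≤ max(f(x₀), f(2^{N+1}))`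
with `N = ⌊log₂ x₀⌋`. The exponents `1/k - 1/3` are nonpositive, so `f` decreases on each
interval `[2^K, 2^{K+1})`, and it remains to see that `m ↦ f(2^m) = 2^{-m/3} ∑_{k=3}^m 2^{m/k}`
decreases for `m ≥ 10`. From `2^t ≥ 1 + t log 2` each term satisfies
`2^{1/3} 2^{m/k} ≥ 2^{(m+1)/k} (1 + (1/3 - 1/k) log 2)`, and for `4 ≤ k ≤ 10` the surplus terms
already pay for the new summand `2^{(m+1)/(m+1)} = 2`.
-/

open Real Finset

lemma chebTheta_nonneg (x : ℝ) : 0 ≤ chebTheta x :=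
  sum_nonneg fun p _ => log_natCast_nonneg p

lemma sum_chebTheta_rpow_le {C x : ℝ} (hθ : ∀ y > 0, chebTheta y ≤ C * y) (hx : 0 < x) :
    ∑ k ∈ Icc 3 ⌊log x / log 2⌋₊, chebTheta (x ^ (k : ℝ)⁻¹) ≤ C * auxF x * x ^ (3 : ℝ)⁻¹ := by
  rw [auxF, mul_sum, sum_mul]
  refine sum_le_sum fun k _ => (hθ _ (rpow_pos_of_pos hx _)).trans_eq ?_
  rw [mul_assoc, ← rpow_add hx, sub_add_cancel]

lemma natCast_inv_le_three_inv {k : ℕ} (hk : 3 ≤ k) : (k : ℝ)⁻¹ ≤ 3⁻¹ :=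
  inv_anti₀ three_pos (by exact_mod_cast hk)

lemma floor_log_div_log_two_mono {x y : ℝ} (hy : 0 < y) (hyx : y ≤ x) :
    ⌊log y / log 2⌋₊ ≤ ⌊log x / log 2⌋₊ :=
  Nat.floor_le_floor (div_le_div_of_nonneg_right (log_le_log hy hyx) (log_pos one_lt_two).le)

lemma floor_log_two_pow_div_log_two (m : ℕ) : ⌊log ((2 : ℝ) ^ m) / log 2⌋₊ = m := by
  rw [log_pow, mul_div_cancel_right₀ _ (log_pos one_lt_two).ne', Nat.floor_natCast]

lemma two_pow_floor_log_div_log_two_le {x : ℝ} (hx : 1 ≤ x) :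
    (2 : ℝ) ^ ⌊log x / log 2⌋₊ ≤ x := by
  have hlog2 := log_pos one_lt_two
  have h : (⌊log x / log 2⌋₊ : ℝ) * log 2 ≤ log x :=
    (le_div_iff₀ hlog2).1 (Nat.floor_le (div_nonneg (log_nonneg hx) hlog2.le))
  rwa [← log_pow, log_le_log_iff (by positivity) (by linarith)] at h

lemma auxF_le_of_floor_eq {x y : ℝ} (hy : 0 < y) (hyx : y ≤ x)
    (hfloor : ⌊log x / log 2⌋₊ = ⌊log y / log 2⌋₊) : auxF x ≤ auxF y := by
  rw [auxF, auxF, hfloor]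
  exact sum_le_sum fun k hk =>
    rpow_le_rpow_of_nonpos hy hyx (sub_nonpos.2 (natCast_inv_le_three_inv (mem_Icc.1 hk).1))

lemma auxF_two_pow (m : ℕ) :
    auxF (2 ^ m) = (∑ k ∈ Icc 3 m, (2 : ℝ) ^ ((m : ℝ) / k)) / 2 ^ ((m : ℝ) / 3) := by
  rw [auxF, floor_log_two_pow_div_log_two, sum_div]
  refine sum_congr rfl fun k _ => ?_
  rw [rpow_sub (by positivity), ← rpow_natCast, ← rpow_mul zero_le_two, ← rpow_mul zero_le_two]
  simp only [div_eq_mul_inv]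

lemma rpow_mul_one_add_mul_log_le {b : ℝ} (hb : 0 < b) (a t : ℝ) :
    b ^ a * (1 + t * log b) ≤ b ^ (a + t) := by
  rw [rpow_add hb, rpow_def_of_pos hb t]
  gcongr
  linarith [add_one_le_exp (log b * t)]

-- `11 / k` is division in `ℕ`; `2 ^ (11 / k)` bounds `2 ^ ((m + 1) / k)` from below once `m ≥ 10`.
lemma two_le_sum_Icc_four_ten :
    2 ≤ ∑ k ∈ Icc (4 : ℕ) 10, (2 : ℝ) ^ (11 / k) * (((3 : ℝ)⁻¹ - (k : ℝ)⁻¹) * log 2) := by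
  have hsum : ∑ k ∈ Icc (4 : ℕ) 10, (2 : ℝ) ^ (11 / k) * ((3 : ℝ)⁻¹ - (k : ℝ)⁻¹) = 733 / 252 := by
    norm_num [sum_Icc_succ_top]
  simp only [← mul_assoc, ← sum_mul, hsum]
  linarith [log_two_gt_d9]

lemma two_le_sum_Icc_three {m : ℕ} (hm : 10 ≤ m) :
    2 ≤ ∑ k ∈ Icc 3 m, (2 : ℝ) ^ (((m + 1 : ℕ) : ℝ) / k) * (((3 : ℝ)⁻¹ - (k : ℝ)⁻¹) * log 2) := by
  have hterm (k : ℕ) (hk : k ∈ Icc 3 m) : 0 ≤ ((3 : ℝ)⁻¹ - (k : ℝ)⁻¹) * log 2 :=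
    mul_nonneg (sub_nonneg.2 (natCast_inv_le_three_inv (mem_Icc.1 hk).1)) (log_pos one_lt_two).le
  refine two_le_sum_Icc_four_ten.trans ?_
  calc ∑ k ∈ Icc (4 : ℕ) 10, (2 : ℝ) ^ (11 / k) * (((3 : ℝ)⁻¹ - (k : ℝ)⁻¹) * log 2)
      ≤ ∑ k ∈ Icc (4 : ℕ) 10,
          (2 : ℝ) ^ (((m + 1 : ℕ) : ℝ) / k) * (((3 : ℝ)⁻¹ - (k : ℝ)⁻¹) * log 2) := by
        refine sum_le_sum fun k hk => ?_
        gcongr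
        · exact hterm k (Icc_subset_Icc (by norm_num) hm hk)
        rw [← rpow_natCast]
        refine rpow_le_rpow_of_exponent_le one_le_two (Nat.cast_div_le.trans ?_)
        gcongr
        exact_mod_cast (by omega : 11 ≤ m + 1)
    _ ≤ ∑ k ∈ Icc 3 m, (2 : ℝ) ^ (((m + 1 : ℕ) : ℝ) / k) * (((3 : ℝ)⁻¹ - (k : ℝ)⁻¹) * log 2) :=
        sum_le_sum_of_subset_of_nonneg (Icc_subset_Icc (by norm_num) hm)
          fun k hk _ => mul_nonneg (by positivity) (hterm k hk)

lemma sum_two_rpow_div_succ_le {m : ℕ} (hm : 10 ≤ m) :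
    ∑ k ∈ Icc 3 (m + 1), (2 : ℝ) ^ (((m + 1 : ℕ) : ℝ) / k) ≤
      2 ^ (3 : ℝ)⁻¹ * ∑ k ∈ Icc 3 m, (2 : ℝ) ^ ((m : ℝ) / k) := by
  have hterm (k : ℕ) (_ : k ∈ Icc 3 m) :
      (2 : ℝ) ^ (((m + 1 : ℕ) : ℝ) / k) * (1 + ((3 : ℝ)⁻¹ - (k : ℝ)⁻¹) * log 2) ≤
        2 ^ (3 : ℝ)⁻¹ * 2 ^ ((m : ℝ) / k) := by
    refine (rpow_mul_one_add_mul_log_le two_pos _ _).trans_eq ?_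
    rw [← rpow_add two_pos]
    congr 1
    push_cast
    ring
  have htop : (2 : ℝ) ^ (((m + 1 : ℕ) : ℝ) / ((m + 1 : ℕ) : ℝ)) = 2 := by
    rw [div_self (by positivity), rpow_one]
  have hsum := sum_le_sum hterm
  simp only [mul_add, mul_one, sum_add_distrib, ← mul_sum] at hsum
  rw [sum_Icc_succ_top (by omega), htop]
  linarith [two_le_sum_Icc_three hm]

lemma auxF_two_pow_antitoneOn : AntitoneOn (fun m : ℕ => auxF (2 ^ m)) {m | 10 ≤ m} := by
  refine antitoneOn_nat_Ici_of_succ_le fun m hm => ?_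
  simp only [auxF_two_pow]
  have hpow : (2 : ℝ) ^ (((m + 1 : ℕ) : ℝ) / 3) = 2 ^ (3 : ℝ)⁻¹ * 2 ^ ((m : ℝ) / 3) := by
    rw [← rpow_add two_pos]
    push_cast
    ring_nf
  rw [hpow, div_le_div_iff₀ (by positivity) (by positivity)]
  calc (∑ k ∈ Icc 3 (m + 1), (2 : ℝ) ^ (((m + 1 : ℕ) : ℝ) / k)) * 2 ^ ((m : ℝ) / 3)
      ≤ (2 ^ (3 : ℝ)⁻¹ * ∑ k ∈ Icc 3 m, (2 : ℝ) ^ ((m : ℝ) / k)) * 2 ^ ((m : ℝ) / 3) := by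
        gcongr
        exact sum_two_rpow_div_succ_le hm
    _ = _ := by ring

theorem statement4_general (x₀ α : ℝ) (hx₀ : x₀ ≥ 2 ^ 9)
    (hθ : ∀ x : ℝ, x > 0 → chebTheta x ≤ (1 + α) * x) :
    ∀ x : ℝ, x ≥ x₀ →
      ∑ k ∈ Finset.Icc 3 ⌊Real.log x / Real.log 2⌋₊, chebTheta (x ^ ((k : ℝ)⁻¹)) ≤
        ((1 + α) * max (auxF x₀) (auxF ((2 : ℝ) ^ (⌊Real.log x₀ / Real.log 2⌋₊ + 1)))) *
          x ^ ((3 : ℝ)⁻¹) := by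
  intro x hx
  have hx₀1 : 1 ≤ x₀ := le_trans (by norm_num) hx₀
  have hx1 : 1 ≤ x := hx₀1.trans hx
  have hC : 0 ≤ 1 + α := by simpa using (chebTheta_nonneg 1).trans (hθ 1 one_pos)
  have hN : 9 ≤ ⌊log x₀ / log 2⌋₊ := by
    simpa only [floor_log_two_pow_div_log_two] using
      floor_log_div_log_two_mono (by norm_num : (0 : ℝ) < 2 ^ 9) hx₀
  have hfx : auxF x ≤ max (auxF x₀) (auxF (2 ^ (⌊log x₀ / log 2⌋₊ + 1))) := by
    rcases (floor_log_div_log_two_mono (by positivity) hx).eq_or_lt with hNK | hNK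
    · exact le_max_of_le_left (auxF_le_of_floor_eq (by positivity) hx hNK.symm)
    · refine le_max_of_le_right ((auxF_le_of_floor_eq (by positivity)
        (two_pow_floor_log_div_log_two_le hx1) (floor_log_two_pow_div_log_two _).symm).trans ?_)
      exact auxF_two_pow_antitoneOn (show 10 ≤ _ by omega) (show 10 ≤ _ by omega) hNK
  calc _ ≤ (1 + α) * auxF x * x ^ (3 : ℝ)⁻¹ := sum_chebTheta_rpow_le hθ (by positivity)
    _ ≤ _ := by gcongr

theorem statement4 (x₀ α : ℝ) (hx₀ : x₀ ≥ 2 ^ 9) (hα : α > 0)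
    (hθ : ∀ x : ℝ, x > 0 → chebTheta x ≤ (1 + α) * x) :
    ∀ x : ℝ, x ≥ x₀ →
      ∑ k ∈ Finset.Icc 3 ⌊Real.log x / Real.log 2⌋₊, chebTheta (x ^ ((k : ℝ)⁻¹)) ≤
        ((1 + α) * max (auxF x₀) (auxF ((2 : ℝ) ^ (⌊Real.log x₀ / Real.log 2⌋₊ + 1)))) *
          x ^ ((3 : ℝ)⁻¹) :=
  statement4_general x₀ α hx₀ hθ
end

section
/- Let k ∈ {1,2,3,4,5}. Assume there exist a positive integer n, nonnegative reals a₁,…,a_n, and x₀ > 0 such that ψ(x) − θ(x) ≤ ∑_{ℓ=1}^{n} a_ℓ·x^{1/(ℓ+1)} for all x ≥ x₀. Let b, b′ be reals with b′ > b ≥ 2k and x₀ ≤ e^b, and assume there exists ε > 0 such that |ψ(x) − x| ≤ ε·x for all x ≥ e^b. Then for all x ∈ [e^b, e^{b′}] one has |θ(x) − x| ≤ B̃_k·x/(log x)^k, where B̃_k = b^k·∑_{ℓ=1}^{n} a_ℓ·exp(−ℓb/(ℓ+1)) + ε·(b′)^k. -/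
open Real Finset

lemma chebTheta_le_chebPsi (x : ℝ) : chebTheta x ≤ chebPsi x := by
  unfold chebTheta chebPsi
  calc ∑ p ∈ (range (⌊x⌋₊ + 1)).filter Nat.Prime, log p
      = ∑ p ∈ (range (⌊x⌋₊ + 1)).filter Nat.Prime, ArithmeticFunction.vonMangoldt p :=
        sum_congr rfl fun p hp =>
          (ArithmeticFunction.vonMangoldt_apply_prime (mem_filter.mp hp).2).symm
    _ ≤ ∑ n ∈ range (⌊x⌋₊ + 1), ArithmeticFunction.vonMangoldt n :=
        sum_le_sum_of_subset_of_nonneg (filter_subset _ _)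
          fun _ _ _ => ArithmeticFunction.vonMangoldt_nonneg

lemma abs_chebTheta_sub_le (x : ℝ) :
    |chebTheta x - x| ≤ |chebPsi x - x| + (chebPsi x - chebTheta x) := by
  have hgap : 0 ≤ chebPsi x - chebTheta x := sub_nonneg.mpr (chebTheta_le_chebPsi x)
  calc |chebTheta x - x| = |(chebPsi x - x) - (chebPsi x - chebTheta x)| := by
        congr 1; ring
    _ ≤ |chebPsi x - x| + |chebPsi x - chebTheta x| := abs_sub _ _
    _ = |chebPsi x - x| + (chebPsi x - chebTheta x) := by rw [abs_of_nonneg hgap]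

lemma pow_le_pow_mul_exp_half_sub {k : ℕ} {b L : ℝ} (hb : 2 * (k : ℝ) ≤ b) (hbL : b ≤ L) :
    L ^ k ≤ b ^ k * exp ((L - b) / 2) := by
  rcases Nat.eq_zero_or_pos k with rfl | hk
  · simpa using one_le_exp (by linarith : 0 ≤ (L - b) / 2)
  have hb0 : 0 < b := by
    have : (1 : ℝ) ≤ k := by exact_mod_cast hk
    linarith
  have hL : L ≤ b * exp ((L - b) / b) := by
    calc L = b * ((L - b) / b + 1) := by field_simp; ring
      _ ≤ b * exp ((L - b) / b) := by gcongr; exact add_one_le_exp _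
  have hexp : k * ((L - b) / b) ≤ (L - b) / 2 := by
    rw [← mul_div_assoc, div_le_div_iff₀ hb0 two_pos]
    nlinarith [sub_nonneg.mpr hbL]
  calc L ^ k ≤ (b * exp ((L - b) / b)) ^ k := by gcongr; linarith
    _ = b ^ k * exp (k * ((L - b) / b)) := by rw [mul_pow, exp_nat_mul]
    _ ≤ b ^ k * exp ((L - b) / 2) := by gcongr

lemma log_pow_mul_rpow_inv_add_one_le {k : ℕ} {b x ℓ : ℝ} (hx : 0 < x) (hb : 2 * (k : ℝ) ≤ b)
    (hbx : b ≤ log x) (hℓ : 1 ≤ ℓ) :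
    log x ^ k * x ^ (ℓ + 1)⁻¹ ≤ b ^ k * exp (-(ℓ * b) / (ℓ + 1)) * x := by
  set L := log x
  have hb0 : 0 ≤ b := le_trans (by positivity) hb
  have hℓ1 : 0 < ℓ + 1 := by linarith
  have hhalf : (L - b) / 2 ≤ ℓ * (L - b) / (ℓ + 1) := by
    rw [div_le_div_iff₀ two_pos hℓ1]
    nlinarith [sub_nonneg.mpr hbx]
  calc L ^ k * x ^ (ℓ + 1)⁻¹ ≤ b ^ k * exp (ℓ * (L - b) / (ℓ + 1)) * x ^ (ℓ + 1)⁻¹ := by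
        gcongr
        exact (pow_le_pow_mul_exp_half_sub hb hbx).trans (by gcongr)
    _ = b ^ k * (exp (ℓ * (L - b) / (ℓ + 1) + L * (ℓ + 1)⁻¹)) := by
        rw [rpow_def_of_pos hx, exp_add, mul_assoc]
    _ = b ^ k * exp (-(ℓ * b) / (ℓ + 1)) * x := by
        rw [mul_assoc, ← exp_log hx, ← exp_add]
        congr 2
        field_simp
        ring

theorem statement9_general (k : ℕ)
    (n : ℕ) (a : ℕ → ℝ) (ha : ∀ ℓ ∈ Finset.Icc 1 n, 0 ≤ a ℓ)
    (x₀ : ℝ)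
    (hψθ : ∀ x : ℝ, x ≥ x₀ →
      chebPsi x - chebTheta x ≤ ∑ ℓ ∈ Finset.Icc 1 n, a ℓ * x ^ (((ℓ : ℝ) + 1)⁻¹))
    (b b' : ℝ) (hb : 2 * (k : ℝ) ≤ b) (hx₀b : x₀ ≤ Real.exp b)
    (ε : ℝ)
    (hψ : ∀ x : ℝ, x ≥ Real.exp b → |chebPsi x - x| ≤ ε * x) :
    ∀ x : ℝ, Real.exp b ≤ x → x ≤ Real.exp b' →
      |chebTheta x - x| ≤
        (b ^ k * ∑ ℓ ∈ Finset.Icc 1 n, a ℓ * Real.exp (-((ℓ : ℝ) * b) / ((ℓ : ℝ) + 1))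
            + ε * b' ^ k) * x / (Real.log x) ^ k := by
  intro x hbx hxb'
  have hx : 0 < x := (exp_pos b).trans_le hbx
  have hbL : b ≤ log x := (le_log_iff_exp_le hx).mpr hbx
  have hLb' : log x ≤ b' := (log_le_iff_le_exp hx).mpr hxb'
  have hε0 : 0 ≤ ε := nonneg_of_mul_nonneg_left ((abs_nonneg _).trans (hψ x hbx)) hx
  have hLk : 0 < log x ^ k := by
    rcases k.eq_zero_or_pos with rfl | hk
    · exact one_pos
    · exact pow_pos (by linarith [(Nat.one_le_cast (α := ℝ)).mpr hk]) k
  have hsum : (∑ ℓ ∈ Icc 1 n, a ℓ * x ^ ((ℓ : ℝ) + 1)⁻¹) * log x ^ k ≤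
      b ^ k * (∑ ℓ ∈ Icc 1 n, a ℓ * exp (-((ℓ : ℝ) * b) / ((ℓ : ℝ) + 1))) * x := by
    simp only [sum_mul, mul_sum]
    refine sum_le_sum fun ℓ hℓ => ?_
    have hterm := log_pow_mul_rpow_inv_add_one_le hx hb hbL (ℓ := ℓ)
      (by exact_mod_cast (mem_Icc.mp hℓ).1)
    nlinarith [ha ℓ hℓ]
  rw [le_div_iff₀ hLk]
  calc |chebTheta x - x| * log x ^ k
      ≤ (ε * x + ∑ ℓ ∈ Icc 1 n, a ℓ * x ^ ((ℓ : ℝ) + 1)⁻¹) * log x ^ k := by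
        gcongr
        exact (abs_chebTheta_sub_le x).trans
          (add_le_add (hψ x hbx) (hψθ x (hx₀b.trans hbx)))
    _ ≤ ε * x * b' ^ k
          + b ^ k * (∑ ℓ ∈ Icc 1 n, a ℓ * exp (-((ℓ : ℝ) * b) / ((ℓ : ℝ) + 1))) * x := by
        rw [add_mul]
        exact add_le_add (by gcongr; linarith) hsum
    _ = _ := by ring

theorem statement9 (k : ℕ) (hk1 : 1 ≤ k) (hk5 : k ≤ 5)
    (n : ℕ) (hn : 0 < n) (a : ℕ → ℝ) (ha : ∀ ℓ ∈ Finset.Icc 1 n, 0 ≤ a ℓ)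
    (x₀ : ℝ) (hx₀ : 0 < x₀)
    (hψθ : ∀ x : ℝ, x ≥ x₀ →
      chebPsi x - chebTheta x ≤ ∑ ℓ ∈ Finset.Icc 1 n, a ℓ * x ^ (((ℓ : ℝ) + 1)⁻¹))
    (b b' : ℝ) (hbb' : b < b') (hb : 2 * (k : ℝ) ≤ b) (hx₀b : x₀ ≤ Real.exp b)
    (ε : ℝ) (hε : ε > 0)
    (hψ : ∀ x : ℝ, x ≥ Real.exp b → |chebPsi x - x| ≤ ε * x) :
    ∀ x : ℝ, Real.exp b ≤ x → x ≤ Real.exp b' →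
      |chebTheta x - x| ≤
        (b ^ k * ∑ ℓ ∈ Finset.Icc 1 n, a ℓ * Real.exp (-((ℓ : ℝ) * b) / ((ℓ : ℝ) + 1))
            + ε * b' ^ k) * x / (Real.log x) ^ k :=
  statement9_general k n a ha x₀ hψθ b b' hb hx₀b ε hψ
end

section
/- Let 1 ≤ u < v be reals. Assume there exist c > 0 and C > 0 such that −c ≤ (x − ψ(x))/√x ≤ C for every x ∈ [u, v], and assume there exists c₀ > 0 such that ψ(x) < c₀·x for all x > 0. If u² < v, then θ(x) ≥ x − (C + 1)·x^{1/2} − c₀·x^{1/3} − c·x^{1/4} − c₀·x^{1/5} for all x ∈ [u², v]. -/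
/-!
If `p ^ L ≤ x < p ^ (L + 1)`, then `ψ x` counts `log p` exactly `L` times, `θ x` once and
`ψ (x ^ (1/k))` `⌊L/k⌋` times; as `L - 1 ≤ ⌊L/2⌋ + ⌊L/3⌋ + ⌊L/5⌋`, this gives the Costa Pereira
inequality `ψ x - θ x ≤ ψ (x ^ (1/2)) + ψ (x ^ (1/3)) + ψ (x ^ (1/5))`.
The hypothesis on `[u, v]` bounds `ψ x` from below at `x` and `ψ (√x)` from above at `√x`
(both points lie in `[u, v]` when `u ^ 2 ≤ x ≤ v`), and `ψ y < c₀ y` bounds the other two terms.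
-/

open Real Chebyshev

theorem chebPsi_eq_psi (x : ℝ) : chebPsi x = ψ x := by
  rw [chebPsi, psi_eq_sum_Icc, Nat.range_succ_eq_Icc_zero]

theorem chebTheta_eq_theta (x : ℝ) : chebTheta x = θ x := by
  rw [chebTheta, theta_eq_sum_Icc, Nat.range_succ_eq_Icc_zero]

theorem chebPsi_sub_chebTheta_le (x : ℝ) :
    chebPsi x - chebTheta x ≤
      chebPsi (√x) + chebPsi (x ^ ((1 : ℝ) / 3)) + chebPsi (x ^ ((1 : ℝ) / 5)) := by
  simpa only [chebPsi_eq_psi, chebTheta_eq_theta, sqrt_eq_rpow, one_div]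
    using psi_sub_theta_le_psi_add_psi_add_psi x

theorem sqrt_sqrt_eq_rpow_one_div_four {x : ℝ} (hx : 0 ≤ x) : √(√x) = x ^ ((1 : ℝ) / 4) := by
  rw [sqrt_eq_rpow, sqrt_eq_rpow, ← rpow_mul hx]
  norm_num

theorem statement11_general (u v : ℝ) (hu : 1 ≤ u)
    (c C : ℝ)
    (h : ∀ x : ℝ, u ≤ x → x ≤ v →
      -c ≤ (x - chebPsi x) / Real.sqrt x ∧ (x - chebPsi x) / Real.sqrt x ≤ C)
    (c₀ : ℝ) (hψ : ∀ x : ℝ, x > 0 → chebPsi x < c₀ * x) :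
    ∀ x : ℝ, u ^ 2 ≤ x → x ≤ v →
      chebTheta x ≥ x - (C + 1) * x ^ ((1 : ℝ) / 2) - c₀ * x ^ ((1 : ℝ) / 3)
        - c * x ^ ((1 : ℝ) / 4) - c₀ * x ^ ((1 : ℝ) / 5) := by
  intro x hux hxv
  have hx : 1 ≤ x := by nlinarith
  have hsqrt_pos : 0 < √x := sqrt_pos.mpr (by linarith)
  have hu_sqrt : u ≤ √x := le_sqrt_of_sq_le hux
  have hsqrt_le : √x ≤ x := sqrt_le_self_iff.mpr (.inr hx)
  have hsqrt_v : √x ≤ v := hsqrt_le.trans hxv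
  have hpsi_x : x - C * √x ≤ chebPsi x := by
    have := (div_le_iff₀ hsqrt_pos).mp (h x (hu_sqrt.trans hsqrt_le) hxv).2
    linarith
  have hpsi_sqrt : chebPsi (√x) ≤ √x + c * x ^ ((1 : ℝ) / 4) := by
    have := (le_div_iff₀ (sqrt_pos.mpr hsqrt_pos)).mp (h (√x) hu_sqrt hsqrt_v).1
    rw [sqrt_sqrt_eq_rpow_one_div_four (by linarith)] at this
    linarith
  have hpsi_3 := hψ (x ^ ((1 : ℝ) / 3)) (by positivity)
  have hpsi_5 := hψ (x ^ ((1 : ℝ) / 5)) (by positivity)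
  rw [← sqrt_eq_rpow]
  linarith [chebPsi_sub_chebTheta_le x]

theorem statement11 (u v : ℝ) (hu : 1 ≤ u) (huv : u < v)
    (c C : ℝ) (hc : 0 < c) (hC : 0 < C)
    (h : ∀ x : ℝ, u ≤ x → x ≤ v →
      -c ≤ (x - chebPsi x) / Real.sqrt x ∧ (x - chebPsi x) / Real.sqrt x ≤ C)
    (c₀ : ℝ) (hc₀ : 0 < c₀) (hψ : ∀ x : ℝ, x > 0 → chebPsi x < c₀ * x)
    (hu2 : u ^ 2 < v) :
    ∀ x : ℝ, u ^ 2 ≤ x → x ≤ v →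
      chebTheta x ≥ x - (C + 1) * x ^ ((1 : ℝ) / 2) - c₀ * x ^ ((1 : ℝ) / 3)
        - c * x ^ ((1 : ℝ) / 4) - c₀ * x ^ ((1 : ℝ) / 5) :=
  statement11_general u v hu c C h c₀ hψ
end

section
/- Let k ∈ {1,2,3,4,5} and let 0 < a < b be reals with a > e^{k+1}. Let p_n denote the n-th prime, and let n₀ and n₁ be the indices of the smallest primes greater than a and greater than b, respectively. Define 𝒟_k(a,b) = max_{n₀ ≤ n ≤ n₁} (log p_n)^k · (p_n − θ(p_{n−1})) / p_n. If 𝒟_k(a,b) < (k+1)^{k+1}, then θ(x) ≥ x − 𝒟_k(a,b)·x/(log x)^k for all real x with a ≤ x ≤ b. -/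
/-- The `n`-th prime number, indexed so that `nthPrime 1 = 2`, `nthPrime 2 = 3`, … -/
noncomputable def nthPrime (n : ℕ) : ℕ := Nat.nth Nat.Prime (n - 1)

/-!
If `p_{n-1} ≤ x < p_n`, no prime lies in `(p_{n-1}, x]`, so `θ(x) = θ(p_{n-1})`, and the
definition of `𝒟` gives `θ(p_{n-1}) ≥ p_n - 𝒟 p_n / (log p_n)^k`. It remains to move from `p_n`
down to `x`: `f(t) = t - 𝒟 t / (log t)^k` has derivative `1 - 𝒟 (log t - k) / (log t)^(k+1)`,
which is nonnegative once `log t ≥ k + 1` because `u^(k+1) ≥ (k+1)^(k+1) (u - k)` (the tangent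
line of `u^(k+1)` at `u = k + 1`, i.e. Bernoulli's inequality).
-/

open Real Set

lemma add_one_pow_mul_sub_le_pow (k : ℕ) {u : ℝ} (hu : 0 ≤ u) :
    ((k : ℝ) + 1) ^ (k + 1) * (u - k) ≤ u ^ (k + 1) := by
  have bernoulli := one_add_mul_le_pow (a := u / (k + 1) - 1) (by
    have : 0 ≤ u / (k + 1) := by positivity
    linarith) (k + 1)
  calc ((k : ℝ) + 1) ^ (k + 1) * (u - k)
      = ((k : ℝ) + 1) ^ (k + 1) * (1 + ((k + 1 : ℕ) : ℝ) * (u / (k + 1) - 1)) := by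
        push_cast; field_simp; ring
    _ ≤ ((k : ℝ) + 1) ^ (k + 1) * (1 + (u / (k + 1) - 1)) ^ (k + 1) :=
        mul_le_mul_of_nonneg_left bernoulli (by positivity)
    _ = u ^ (k + 1) := by rw [← mul_pow]; field_simp; ring_nf

lemma hasDerivAt_div_log_pow (k : ℕ) {t : ℝ} (ht : 1 < t) :
    HasDerivAt (fun t => t / log t ^ k) ((log t - k) / log t ^ (k + 1)) t := by
  have hlog : 0 < log t := log_pos ht
  have h := (hasDerivAt_id' t).fun_div ((hasDerivAt_log (zero_lt_one.trans ht).ne').fun_pow k)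
    (pow_pos hlog k).ne'
  refine h.congr_deriv ?_
  rcases k with _ | k
  · simp [hlog.ne']
  · rw [Nat.add_sub_cancel]
    field_simp
    ring

lemma monotoneOn_sub_mul_div_log_pow (k : ℕ) {D : ℝ} (hD : D ≤ ((k : ℝ) + 1) ^ (k + 1)) :
    MonotoneOn (fun t => t - D * t / log t ^ k) (Ici (exp ((k : ℝ) + 1))) := by
  have hone : ∀ t ∈ Ici (exp ((k : ℝ) + 1)), 1 < t := fun t ht =>
    lt_of_lt_of_le (one_lt_exp_iff.2 (by positivity)) ht
  have hderiv : ∀ t ∈ Ici (exp ((k : ℝ) + 1)), HasDerivAt (fun t => t - D * t / log t ^ k)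
      (1 - D * ((log t - k) / log t ^ (k + 1))) t := fun t ht => by
    simpa only [mul_div_assoc] using
      (hasDerivAt_id' t).fun_sub ((hasDerivAt_div_log_pow k (hone t ht)).const_mul D)
  refine monotoneOn_of_hasDerivWithinAt_nonneg (convex_Ici _)
    (fun t ht => (hderiv t ht).continuousAt.continuousWithinAt)
    (fun t ht => (hderiv t (interior_subset ht)).hasDerivWithinAt) fun t ht => ?_
  have ht : exp ((k : ℝ) + 1) ≤ t := interior_subset ht
  have hlog : (k : ℝ) + 1 ≤ log t := by
    simpa using log_le_log (exp_pos _) ht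
  have hpos : 0 < log t ^ (k + 1) := pow_pos (by linarith) _
  rw [sub_nonneg, ← mul_div_assoc, div_le_one hpos]
  calc D * (log t - k) ≤ ((k : ℝ) + 1) ^ (k + 1) * (log t - k) := by gcongr; linarith
    _ ≤ log t ^ (k + 1) := add_one_pow_mul_sub_le_pow k (by linarith)

lemma sub_mul_div_log_pow_le_of_log_pow_mul_sub_div_le (k : ℕ) {P T D : ℝ} (hP : 1 < P)
    (h : log P ^ k * (P - T) / P ≤ D) : P - D * P / log P ^ k ≤ T := by
  have hL : 0 < log P ^ k := pow_pos (log_pos hP) k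
  rw [div_le_iff₀ (by linarith)] at h
  rw [sub_le_comm, le_div_iff₀ hL]
  linarith

lemma chebTheta_eq_of_forall_prime_lt {q : ℕ} {x : ℝ} (hqx : (q : ℝ) ≤ x)
    (h : ∀ p : ℕ, p.Prime → q < p → x < p) : chebTheta x = chebTheta q := by
  unfold chebTheta
  rw [Nat.floor_natCast]
  congr 1
  ext p
  simp only [Finset.mem_filter, Finset.mem_range, Nat.lt_succ_iff, and_congr_left_iff]
  intro hp
  refine ⟨fun hpx => not_lt.1 fun hqp => ?_, fun hpq => hpq.trans (Nat.le_floor hqx)⟩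
  have := h p hp hqp
  have := (Nat.le_floor_iff (by linarith)).1 hpx
  linarith

lemma chebTheta_eq_of_nth_prime_le_of_lt {i : ℕ} {x : ℝ} (hi : (Nat.nth Nat.Prime i : ℝ) ≤ x)
    (hx : x < Nat.nth Nat.Prime (i + 1)) : chebTheta x = chebTheta (Nat.nth Nat.Prime i) := by
  refine chebTheta_eq_of_forall_prime_lt hi fun p hp hip => hx.trans_le ?_
  rw [← Nat.nth_count hp] at hip ⊢
  have := (Nat.nth_lt_nth Nat.infinite_setOfPred_prime).1 hip
  exact_mod_cast (Nat.nth_le_nth Nat.infinite_setOfPred_prime).2 this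

lemma exists_nth_prime_le_lt_succ {x : ℝ} (hx : 2 ≤ x) :
    ∃ i, (Nat.nth Nat.Prime i : ℝ) ≤ x ∧ x < Nat.nth Nat.Prime (i + 1) := by
  have hfloor : 2 ≤ ⌊x⌋₊ := Nat.le_floor (by exact_mod_cast hx)
  set c := Nat.count Nat.Prime (⌊x⌋₊ + 1)
  have hc : c ≠ 0 := Nat.primeCounting_eq_zero_iff.not.2 (by omega)
  refine ⟨c - 1, ?_, ?_⟩
  · have := Nat.nth_lt_of_lt_count (p := Nat.Prime) (Nat.sub_one_lt hc)
    have : (Nat.nth Nat.Prime (c - 1) : ℝ) ≤ ⌊x⌋₊ := by exact_mod_cast Nat.lt_succ_iff.1 this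
    exact this.trans (Nat.floor_le (by linarith))
  · rw [Nat.sub_add_cancel (Nat.one_le_iff_ne_zero.2 hc)]
    have := Nat.le_nth_count Nat.infinite_setOfPred_prime (⌊x⌋₊ + 1)
    have : ((⌊x⌋₊ + 1 : ℕ) : ℝ) ≤ Nat.nth Nat.Prime c := by exact_mod_cast this
    push_cast at this
    linarith [Nat.lt_floor_add_one x]

lemma monotone_nthPrime : Monotone nthPrime := fun _ _ h =>
  (Nat.nth_strictMono Nat.infinite_setOfPred_prime).monotone (Nat.sub_le_sub_right h 1)

theorem statement13_general (k : ℕ)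
    (a b : ℝ) (hab : a < b) (hae : Real.exp ((k : ℝ) + 1) < a)
    (n₀ n₁ : ℕ)
    (hn₀ : a < (nthPrime n₀ : ℝ) ∧ ∀ m : ℕ, a < (nthPrime m : ℝ) → n₀ ≤ m)
    (hn₁ : b < (nthPrime n₁ : ℝ) ∧ ∀ m : ℕ, b < (nthPrime m : ℝ) → n₁ ≤ m)
    (D : ℝ)
    (hD : D = Finset.sup' (Finset.Icc n₀ n₁)
      (Finset.nonempty_Icc.mpr (hn₀.2 n₁ (lt_trans hab hn₁.1)))
      (fun n => (Real.log (nthPrime n)) ^ k *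
        ((nthPrime n : ℝ) - chebTheta (nthPrime (n - 1))) / (nthPrime n)))
    (hDk : D < ((k : ℝ) + 1) ^ (k + 1)) :
    ∀ x : ℝ, a ≤ x → x ≤ b → chebTheta x ≥ x - D * x / (Real.log x) ^ k := by
  intro x hax hxb
  have hex : exp ((k : ℝ) + 1) < x := hae.trans_le hax
  have hx2 : 2 ≤ x := by linarith [add_one_le_exp ((k : ℝ) + 1), k.cast_nonneg (α := ℝ)]
  obtain ⟨i, hi, hxi⟩ := exists_nth_prime_le_lt_succ hx2
  have hp : nthPrime (i + 2) = Nat.nth Nat.Prime (i + 1) := rfl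
  have hq : nthPrime (i + 2 - 1) = Nat.nth Nat.Prime i := rfl
  have hmem : i + 2 ∈ Finset.Icc n₀ n₁ := by
    refine Finset.mem_Icc.2 ⟨hn₀.2 _ (by rw [hp]; linarith), not_lt.1 fun h => ?_⟩
    have : (nthPrime n₁ : ℝ) ≤ Nat.nth Nat.Prime i := by
      exact_mod_cast monotone_nthPrime (Nat.le_of_lt_succ h)
    linarith [hn₁.1]
  have hDp := hD ▸ Finset.le_sup' _ hmem
  rw [hp, hq] at hDp
  calc x - D * x / log x ^ k
      ≤ Nat.nth Nat.Prime (i + 1) - D * Nat.nth Nat.Prime (i + 1) /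
          log (Nat.nth Nat.Prime (i + 1)) ^ k :=
        monotoneOn_sub_mul_div_log_pow k hDk.le hex.le (hex.trans hxi).le hxi.le
    _ ≤ chebTheta (Nat.nth Nat.Prime i) :=
        sub_mul_div_log_pow_le_of_log_pow_mul_sub_div_le k (by linarith) hDp
    _ = chebTheta x := (chebTheta_eq_of_nth_prime_le_of_lt hi hxi).symm

theorem statement13 (k : ℕ) (hk1 : 1 ≤ k) (hk5 : k ≤ 5)
    (a b : ℝ) (ha : 0 < a) (hab : a < b) (hae : Real.exp ((k : ℝ) + 1) < a)
    (n₀ n₁ : ℕ)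
    (hn₀ : a < (nthPrime n₀ : ℝ) ∧ ∀ m : ℕ, a < (nthPrime m : ℝ) → n₀ ≤ m)
    (hn₁ : b < (nthPrime n₁ : ℝ) ∧ ∀ m : ℕ, b < (nthPrime m : ℝ) → n₁ ≤ m)
    (D : ℝ)
    (hD : D = Finset.sup' (Finset.Icc n₀ n₁)
      (Finset.nonempty_Icc.mpr (hn₀.2 n₁ (lt_trans hab hn₁.1)))
      (fun n => (Real.log (nthPrime n)) ^ k *
        ((nthPrime n : ℝ) - chebTheta (nthPrime (n - 1))) / (nthPrime n)))
    (hDk : D < ((k : ℝ) + 1) ^ (k + 1)) :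
    ∀ x : ℝ, a ≤ x → x ≤ b → chebTheta x ≥ x - D * x / (Real.log x) ^ k :=
  statement13_general k a b hab hae n₀ n₁ hn₀ hn₁ D hD hDk
end
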